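/- Let L be an integral ℓ-monoid and let A = (A, X, δ^A, σ^A, τ^A) be a fuzzy finite automaton over L. Define inductively a sequence (E_k) of crisp equivalences on A by: E₁(a,b) = 1 if τ^A(a) = τ^A(b) and E₁(a,b) = 0 otherwise; and E_{k+1} = E_k ∧ E_k^r, where E_k^r(a,b) = 1 if (δ^A_x∘E_k)(a,c) = (δ^A_x∘E_k)(b,c) for all x ∈ X and c ∈ A, and E_k^r(a,b) = 0 otherwise. Then the sequence (E_k) is descending, there is a least k ∈ ℕ such that E_k = E_{k+m} for every m ∈ ℕ, and this E_k is the greatest right invariant crisp equivalence on A. -/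

import Mathlib

/-!
Each `E_k` is the `{0, 1}`-valued image of a crisp equivalence `EseqRel k`, and these form a
descending chain in the finite lattice of relations on `A`, so the chain becomes stationary.
Once `E_{k+1} = E_k`, the rows of `δ_x ∘ E_k` are constant on `E_k`-classes, which makes `E_k`
right invariant. Conversely, a right invariant crisp equivalence `F ≤ E_k` forces `F`-related
states to have equal rows of `δ_x ∘ E_k`, so by induction `F` lies below every `E_k`.
-/

attribute [local instance] Classical.propDecidable

/-- A lattice-ordered monoid (ℓ-monoid). -/
class LMonoid (L : Type*) extends Lattice L, BoundedOrder L, Monoid L where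
  mul_bot : ∀ x : L, x * ⊥ = ⊥
  bot_mul : ∀ x : L, ⊥ * x = ⊥
  mul_sup : ∀ x y z : L, x * (y ⊔ z) = x * y ⊔ x * z
  sup_mul : ∀ x y z : L, (x ⊔ y) * z = x * z ⊔ y * z

/-- An integral ℓ-monoid: the unit of the multiplication is the top element of the lattice. -/
class IntegralLMonoid (L : Type*) extends LMonoid L where
  one_eq_top : (1 : L) = ⊤

noncomputable section

/-- Composition of fuzzy relations: `(R ∘ S)(a,b) = ⋁_{c} R(a,c) ⊗ S(c,b)`. -/
def fcomp {L A : Type*} [IntegralLMonoid L] [Fintype A] (R S : A → A → L) : A → A → L :=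
  fun a b => Finset.univ.sup fun c => R a c * S c b

/-- Composition of a fuzzy relation with a fuzzy set: `(R ∘ f)(a) = ⋁_{b} R(a,b) ⊗ f(b)`. -/
def fcompf {L A : Type*} [IntegralLMonoid L] [Fintype A] (R : A → A → L) (f : A → L) :
    A → L :=
  fun a => Finset.univ.sup fun b => R a b * f b

/-- `E` is a right invariant crisp equivalence on the fuzzy automaton `(A, X, δ, σ, τ)`:
a crisp (`{0,1} ⊆ L`-valued) equivalence with `E ∘ δ_x ≤ δ_x ∘ E` for all `x ∈ X` and
`E ∘ τ = τ`. -/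
def RightInvCrispEquiv {L A X : Type*} [IntegralLMonoid L] [Fintype A]
    (δ : A → X → A → L) (τ : A → L) (E : A → A → L) : Prop :=
  (∀ a b, E a b = 1 ∨ E a b = ⊥) ∧
  (∀ a, E a a = 1) ∧ (∀ a b, E a b = E b a) ∧
  (∀ a b c, E a b * E b c ≤ E a c) ∧
  (∀ (x : X) (a b : A),
    fcomp E (fun p q => δ p x q) a b ≤ fcomp (fun p q => δ p x q) E a b) ∧
  (∀ a, fcompf E τ a = τ a)

/-- The descending sequence of crisp equivalences from Theorem 8 (here indexed from `0`,
so `Eseq δ τ k` is the relation `E_{k+1}` of the paper):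
`E₁(a,b) = 1` iff `τ(a) = τ(b)`, and `E_{k+1} = E_k ∧ E_k^r`, where `E_k^r(a,b) = 1` iff
`(δ_x ∘ E_k)(a,c) = (δ_x ∘ E_k)(b,c)` for all `x ∈ X` and `c ∈ A`. -/
def Eseq {L A X : Type*} [IntegralLMonoid L] [Fintype A] (δ : A → X → A → L)
    (τ : A → L) : ℕ → A → A → L
  | 0 => fun a b => if τ a = τ b then 1 else ⊥
  | k + 1 => fun a b => Eseq δ τ k a b ⊓
      (if ∀ (x : X) (c : A), fcomp (fun p q => δ p x q) (Eseq δ τ k) a c =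
          fcomp (fun p q => δ p x q) (Eseq δ τ k) b c
        then (1 : L) else ⊥)

namespace LMonoid

variable {L : Type*} [LMonoid L]

instance toMulLeftMono : MulLeftMono L :=
  ⟨fun c x y h => (le_sup_left : c * x ≤ c * x ⊔ c * y).trans_eq <| by
    rw [← LMonoid.mul_sup, sup_eq_right.mpr h]⟩

instance toMulRightMono : MulRightMono L :=
  ⟨fun c x y h => (le_sup_left : x * c ≤ x * c ⊔ y * c).trans_eq <| by
    rw [← LMonoid.sup_mul, sup_eq_right.mpr h]⟩

theorem finset_sup_mul {ι : Type*} (s : Finset ι) (f : ι → L) (c : L) :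
    s.sup f * c = s.sup fun i => f i * c :=
  Finset.apply_sup_eq_sup_comp (· * c) (fun x y => LMonoid.sup_mul x y c) (LMonoid.bot_mul c)

end LMonoid

section Composition

variable {L A : Type*} [IntegralLMonoid L] [Fintype A]

theorem le_fcomp (R S : A → A → L) (a c b : A) : R a c * S c b ≤ fcomp R S a b :=
  Finset.le_sup (f := fun c => R a c * S c b) (Finset.mem_univ c)

theorem fcomp_le {R S : A → A → L} {a b : A} {t : L} (h : ∀ c, R a c * S c b ≤ t) :
    fcomp R S a b ≤ t :=
  Finset.sup_le fun c _ => h c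

theorem le_fcompf (R : A → A → L) (f : A → L) (a b : A) : R a b * f b ≤ fcompf R f a :=
  Finset.le_sup (f := fun b => R a b * f b) (Finset.mem_univ b)

theorem fcompf_le {R : A → A → L} {f : A → L} {a : A} {t : L} (h : ∀ b, R a b * f b ≤ t) :
    fcompf R f a ≤ t :=
  Finset.sup_le fun b _ => h b

end Composition

section CrispRel

variable {L A : Type*} [IntegralLMonoid L]

def crispRel (r : A → A → Prop) : A → A → L := fun a b => if r a b then 1 else ⊥

variable {r : A → A → Prop} {a b : A}

theorem crispRel_of_rel (h : r a b) : crispRel r a b = (1 : L) := if_pos h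

theorem crispRel_of_not_rel (h : ¬ r a b) : crispRel r a b = (⊥ : L) := if_neg h

theorem crispRel_eq_one_or_eq_bot (r : A → A → Prop) (a b : A) :
    crispRel r a b = (1 : L) ∨ crispRel r a b = (⊥ : L) := by
  by_cases h : r a b
  · exact .inl (crispRel_of_rel h)
  · exact .inr (crispRel_of_not_rel h)

theorem crispRel_comm (hr : ∀ {a b}, r a b → r b a) (a b : A) :
    crispRel r a b = (crispRel r b a : L) := by
  by_cases h : r a b
  · rw [crispRel_of_rel h, crispRel_of_rel (hr h)]
  · rw [crispRel_of_not_rel h, crispRel_of_not_rel (mt hr h)]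

theorem crispRel_mul_le (hr : ∀ {a b c}, r a b → r b c → r a c) (a b c : A) :
    crispRel r a b * crispRel r b c ≤ (crispRel r a c : L) := by
  by_cases hab : r a b
  · by_cases hbc : r b c
    · rw [crispRel_of_rel hab, crispRel_of_rel hbc, crispRel_of_rel (hr hab hbc), one_mul]
    · rw [crispRel_of_not_rel hbc, LMonoid.mul_bot]; exact bot_le
  · rw [crispRel_of_not_rel hab, LMonoid.bot_mul]; exact bot_le

theorem crispRel_injective [Nontrivial L] :
    Function.Injective (crispRel : (A → A → Prop) → A → A → L) := by
  intro r s h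
  have h1 : (1 : L) ≠ ⊥ := IntegralLMonoid.one_eq_top (L := L) ▸ top_ne_bot
  funext a b
  refine propext ⟨fun hr => ?_, fun hs => ?_⟩
  · by_contra hs
    exact h1 ((crispRel_of_rel hr).symm.trans (congrFun₂ h a b ▸ crispRel_of_not_rel hs))
  · by_contra hr
    exact h1 ((crispRel_of_rel hs).symm.trans (congrFun₂ h a b ▸ crispRel_of_not_rel hr))

variable [Fintype A]

theorem fcompf_crispRel (hr : ∀ a, r a a) {τ : A → L} (hτ : ∀ a b, r a b → τ a = τ b) :
    fcompf (crispRel r) τ = τ := by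
  funext a
  refine le_antisymm (fcompf_le fun b => ?_) ?_
  · by_cases hab : r a b
    · rw [crispRel_of_rel hab, one_mul, hτ a b hab]
    · rw [crispRel_of_not_rel hab, LMonoid.bot_mul]; exact bot_le
  · simpa only [crispRel_of_rel (hr a), one_mul] using le_fcompf (crispRel r) τ a a

theorem fcomp_crispRel_le (hr : ∀ a, r a a) {R : A → A → L}
    (hR : ∀ a c, r a c → ∀ b, fcomp R (crispRel r) a b = fcomp R (crispRel r) c b) (a b : A) :
    fcomp (crispRel r) R a b ≤ fcomp R (crispRel r) a b := by
  refine fcomp_le fun c => ?_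
  by_cases hac : r a c
  · rw [crispRel_of_rel hac, one_mul, hR a c hac]
    simpa only [crispRel_of_rel (hr b), mul_one] using le_fcomp R (crispRel r) c b b
  · rw [crispRel_of_not_rel hac, LMonoid.bot_mul]; exact bot_le

theorem rightInvCrispEquiv_crispRel {X : Type*} {δ : A → X → A → L} {τ : A → L}
    (hr : Equivalence r)
    (hδ : ∀ x a c, r a c → ∀ b,
      fcomp (δ · x ·) (crispRel r) a b = fcomp (δ · x ·) (crispRel r) c b)
    (hτ : ∀ a b, r a b → τ a = τ b) :
    RightInvCrispEquiv δ τ (crispRel r) :=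
  ⟨crispRel_eq_one_or_eq_bot r, fun a => crispRel_of_rel (hr.refl a),
    crispRel_comm hr.symm, crispRel_mul_le hr.trans,
    fun x => fcomp_crispRel_le hr.refl (hδ x), congrFun (fcompf_crispRel hr.refl hτ)⟩

end CrispRel

namespace RightInvCrispEquiv

variable {L A X : Type*} [IntegralLMonoid L] [Fintype A] {δ : A → X → A → L} {τ : A → L}
  {F : A → A → L} {a b : A}

theorem eq_one_symm (hF : RightInvCrispEquiv δ τ F) (hab : F a b = 1) : F b a = 1 :=
  (hF.2.2.1 b a).trans hab

theorem le_of_eq_one_imp_eq_one (hF : RightInvCrispEquiv δ τ F) {E : A → A → L}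
    (h : ∀ a b, F a b = 1 → E a b = 1) (a b : A) : F a b ≤ E a b := by
  rcases hF.1 a b with hab | hab
  · rw [hab, h a b hab]
  · rw [hab]; exact bot_le

theorem eq_of_eq_one (hF : RightInvCrispEquiv δ τ F) (hab : F a b = 1) : τ a = τ b := by
  obtain ⟨-, -, hsymm, -, -, hτ⟩ := hF
  have hle : ∀ {a b}, F a b = 1 → τ b ≤ τ a := fun {a b} hab => by
    simpa only [hab, one_mul, hτ a] using le_fcompf F τ a b
  exact le_antisymm (hle ((hsymm b a).trans hab)) (hle hab)

/- Row `a` of `δ_x ∘ E` lies below row `b` since `δ_x(a, ·) ≤ (F ∘ δ_x)(b, ·) ≤ (δ_x ∘ F)(b, ·)`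
and `F ∘ E ≤ E ∘ E ≤ E`. -/
theorem fcomp_le_of_eq_one (hF : RightInvCrispEquiv δ τ F) {E : A → A → L}
    (hE : ∀ a b c, E a b * E b c ≤ E a c) (hFE : ∀ a b, F a b ≤ E a b) (hab : F a b = 1)
    (x : X) (c : A) : fcomp (δ · x ·) E a c ≤ fcomp (δ · x ·) E b c := by
  obtain ⟨-, -, hsymm, -, hinv, -⟩ := hF
  refine fcomp_le fun d => ?_
  have hδ : δ a x d ≤ fcomp (δ · x ·) F b d := by
    simpa only [(hsymm b a).trans hab, one_mul] using
      (le_fcomp F (δ · x ·) b a d).trans (hinv x b d)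
  refine (mul_le_mul_left hδ _).trans ?_
  rw [fcomp, LMonoid.finset_sup_mul]
  refine Finset.sup_le fun e _ => (le_of_eq (mul_assoc _ _ _)).trans ?_
  calc δ b x e * (F e d * E d c) ≤ δ b x e * E e c :=
        mul_le_mul_right ((mul_le_mul_left (hFE e d) _).trans (hE e d c)) _
    _ ≤ fcomp (δ · x ·) E b c := le_fcomp (δ · x ·) E b e c

end RightInvCrispEquiv

section Eseq

variable {L A X : Type*} [IntegralLMonoid L] [Fintype A] (δ : A → X → A → L) (τ : A → L)

def EseqRel : ℕ → A → A → Prop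
  | 0 => fun a b => τ a = τ b
  | k + 1 => fun a b => EseqRel k a b ∧
      ∀ (x : X) (c : A), fcomp (δ · x ·) (Eseq δ τ k) a c = fcomp (δ · x ·) (Eseq δ τ k) b c

theorem Eseq_eq_crispRel (k : ℕ) : Eseq δ τ k = crispRel (EseqRel δ τ k) := by
  induction k with
  | zero => rfl
  | succ k ih =>
    funext a b
    change Eseq δ τ k a b ⊓ _ = _
    rw [congrFun₂ ih a b]
    simp only [crispRel, EseqRel]
    split_ifs <;> simp_all [IntegralLMonoid.one_eq_top]

theorem equivalence_EseqRel (k : ℕ) : Equivalence (EseqRel δ τ k) := by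
  induction k with
  | zero => exact ⟨fun _ => rfl, Eq.symm, Eq.trans⟩
  | succ k ih =>
    exact ⟨fun a => ⟨ih.refl a, fun _ _ => rfl⟩, fun h => ⟨ih.symm h.1, fun x c => (h.2 x c).symm⟩,
      fun h h' => ⟨ih.trans h.1 h'.1, fun x c => (h.2 x c).trans (h'.2 x c)⟩⟩

theorem EseqRel.eq (k : ℕ) {a b : A} (h : EseqRel δ τ k a b) : τ a = τ b := by
  induction k with
  | zero => exact h
  | succ k ih => exact ih h.1

theorem antitone_EseqRel : Antitone (EseqRel δ τ) :=
  antitone_nat_of_succ_le fun _ _ _ h => h.1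

theorem exists_Eseq_add_eq : ∃ k, ∀ m, Eseq δ τ (k + m) = Eseq δ τ k := by
  obtain ⟨k, hk⟩ := WellFoundedLT.antitone_chain_condition (antitone_EseqRel δ τ)
  exact ⟨k, fun m => by rw [Eseq_eq_crispRel, Eseq_eq_crispRel, ← hk (k + m) (k.le_add_right m)]⟩

theorem fcomp_Eseq_eq_of_Eseq_succ_eq {k : ℕ} (h : Eseq δ τ (k + 1) = Eseq δ τ k) {a b : A}
    (hab : EseqRel δ τ k a b) (x : X) (c : A) :
    fcomp (δ · x ·) (Eseq δ τ k) a c = fcomp (δ · x ·) (Eseq δ τ k) b c := by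
  -- over the trivial ℓ-monoid `Eseq` may become stationary before `EseqRel` does
  rcases subsingleton_or_nontrivial L with hL | hL
  · exact Subsingleton.elim _ _
  · rw [Eseq_eq_crispRel, Eseq_eq_crispRel] at h
    rw [← crispRel_injective h] at hab
    exact hab.2 x c

theorem rightInvCrispEquiv_Eseq {k : ℕ} (h : Eseq δ τ (k + 1) = Eseq δ τ k) :
    RightInvCrispEquiv δ τ (Eseq δ τ k) := by
  rw [Eseq_eq_crispRel]
  refine rightInvCrispEquiv_crispRel (equivalence_EseqRel δ τ k) (fun x a c hac b => ?_)
    (fun _ _ => EseqRel.eq δ τ k)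
  rw [← Eseq_eq_crispRel]
  exact fcomp_Eseq_eq_of_Eseq_succ_eq δ τ h hac x b

variable {δ τ}

theorem RightInvCrispEquiv.EseqRel_of_eq_one {F : A → A → L} (hF : RightInvCrispEquiv δ τ F)
    (k : ℕ) {a b : A} (hab : F a b = 1) : EseqRel δ τ k a b := by
  induction k generalizing a b with
  | zero => exact hF.eq_of_eq_one hab
  | succ k ih =>
    have hFE : ∀ a b, F a b ≤ Eseq δ τ k a b := hF.le_of_eq_one_imp_eq_one fun _ _ h => by
      rw [Eseq_eq_crispRel, crispRel_of_rel (ih h)]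
    have hE : ∀ a b c, Eseq δ τ k a b * Eseq δ τ k b c ≤ Eseq δ τ k a c := by
      rw [Eseq_eq_crispRel]; exact crispRel_mul_le (equivalence_EseqRel δ τ k).trans
    exact ⟨ih hab, fun x c => le_antisymm (hF.fcomp_le_of_eq_one hE hFE hab x c)
      (hF.fcomp_le_of_eq_one hE hFE (hF.eq_one_symm hab) x c)⟩

theorem RightInvCrispEquiv.le_Eseq {F : A → A → L} (hF : RightInvCrispEquiv δ τ F)
    (k : ℕ) : ∀ a b, F a b ≤ Eseq δ τ k a b :=
  hF.le_of_eq_one_imp_eq_one fun _ _ h => by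
    rw [Eseq_eq_crispRel, crispRel_of_rel (hF.EseqRel_of_eq_one k h)]

end Eseq

theorem stmt14_general {L A X : Type*} [IntegralLMonoid L] [Fintype A]
    (δ : A → X → A → L) (τ : A → L) :
    (∀ (k : ℕ) (a b : A), Eseq δ τ (k + 1) a b ≤ Eseq δ τ k a b) ∧
    ∃ k : ℕ,
      (∀ m : ℕ, Eseq δ τ (k + m) = Eseq δ τ k) ∧
      (∀ j : ℕ, (∀ m : ℕ, Eseq δ τ (j + m) = Eseq δ τ j) → k ≤ j) ∧
      RightInvCrispEquiv δ τ (Eseq δ τ k) ∧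
      (∀ F : A → A → L, RightInvCrispEquiv δ τ F → ∀ a b, F a b ≤ Eseq δ τ k a b) := by
  have hstab := exists_Eseq_add_eq δ τ
  exact ⟨fun _ _ _ => inf_le_left, Nat.find hstab, Nat.find_spec hstab,
    fun _ hj => Nat.find_min' hstab hj, rightInvCrispEquiv_Eseq δ τ (Nat.find_spec hstab 1),
    fun _ hF => hF.le_Eseq _⟩

/-- Let `L` be an integral ℓ-monoid and `(A, X, δ, σ, τ)` a fuzzy finite
automaton over `L`.  The inductively defined sequence `(E_k)` of crisp equivalences is
descending, there is a least `k` such that `E_k = E_{k+m}` for every `m`, and this `E_k`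
is the greatest right invariant crisp equivalence on the automaton. -/
theorem stmt14 {L A X : Type*} [IntegralLMonoid L] [Fintype A] [Fintype X]
    (δ : A → X → A → L) (σ τ : A → L) :
    (∀ (k : ℕ) (a b : A), Eseq δ τ (k + 1) a b ≤ Eseq δ τ k a b) ∧
    ∃ k : ℕ,
      (∀ m : ℕ, Eseq δ τ (k + m) = Eseq δ τ k) ∧
      (∀ j : ℕ, (∀ m : ℕ, Eseq δ τ (j + m) = Eseq δ τ j) → k ≤ j) ∧
      RightInvCrispEquiv δ τ (Eseq δ τ k) ∧
      (∀ F : A → A → L, RightInvCrispEquiv δ τ F → ∀ a b, F a b ≤ Eseq δ τ k a b) :=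
  stmt14_general δ τ

end
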